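/- Let N ≥ 2 be an integer, let V̄ > 0, and let V* be an equilibrium configuration with mean V̄ having some coordinate equal to v(h) for a real h with 1 < h ≤ (N−1)^{1/4}. Then the restriction of 𝒲 to 𝕍(V̄) does not attain a local minimum at V*. -/

import Mathlib

/-- Droplet volume as a function of height: v(h) = h(h²+3)/4. -/
noncomputable def vol (h : ℝ) : ℝ := h * (h ^ 2 + 3) / 4

/-- Droplet pressure as a function of height: p(h) = 4h/(h²+1). -/
noncomputable def pres (h : ℝ) : ℝ := 4 * h / (h ^ 2 + 1)

/-- Pressure as a function of volume: P(V) = p(h) where v(h) = V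
(v is a strictly increasing bijection of ℝ, so its inverse is well defined). -/
noncomputable def Pfun (V : ℝ) : ℝ := pres (Function.invFun vol V)

/-- Δ_s(x) = |x|^s sgn(x). -/
noncomputable def Ds (s x : ℝ) : ℝ := |x| ^ s * Real.sign x

/-- The energy functional 𝒲(V) = (1/N) Σ_j ∫_0^{V_j} P(u) du. -/
noncomputable def Wfun (N : ℕ) (V : Fin N → ℝ) : ℝ :=
  (1 / (N : ℝ)) * ∑ j, ∫ u in (0 : ℝ)..(V j), Pfun u

/-- The constraint set 𝕍(V̄) = {V ∈ ℝ^N : (1/N) Σ_j V_j = V̄}. -/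
def Vset (N : ℕ) (Vbar : ℝ) : Set (Fin N → ℝ) :=
  {V | (1 / (N : ℝ)) * ∑ j, V j = Vbar}

/-!
In terms of the heights `hⱼ` (with `Vⱼ = vol hⱼ`) the energy is `3/(2N) · ∑ hⱼ²`, and an
equilibrium with one height `h > 1` has all its heights in `{h, h⁻¹}`. Moving volume out of a
droplet of height `h` into `m` droplets of a common height `y` lowers `∑ hⱼ²` for small transfers:
if `y = h`, because `P` is decreasing above height `1`; if `y = h⁻¹` and `m = N - 1 ≥ h⁴`, because
the second variation is a negative multiple of `m - h⁴`, and the third one is negative when that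
vanishes. Since `16 vol(x)² = x² (x² + 3)²`, each comparison `height A ^ 2 < R` reduces to the
polynomial inequality `16 A² < R (R + 3)²` in the transfer parameter `t`, whose difference is
`t²` times a function that is positive for small `t > 0`.
-/

open Filter Topology Finset

lemma vol_strictMono : StrictMono vol := fun a b hab => by
  unfold vol
  nlinarith [sq_nonneg (a + b), sq_nonneg a, sq_nonneg b]

lemma continuous_vol : Continuous vol := by
  unfold vol
  fun_prop

lemma vol_neg (x : ℝ) : vol (-x) = -vol x := by
  unfold vol
  ring

lemma vol_surjective : Function.Surjective vol := by
  intro y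
  have hle : |y| ≤ vol (1 + |y|) := by
    unfold vol
    nlinarith [abs_nonneg y, sq_nonneg (1 + |y|)]
  obtain ⟨x, -, hx⟩ := intermediate_value_Icc (by linarith [abs_nonneg y] : -(1 + |y|) ≤ 1 + |y|)
    continuous_vol.continuousOn
    ⟨by rw [vol_neg]; linarith [neg_abs_le y], hle.trans' (le_abs_self y)⟩
  exact ⟨x, hx⟩

noncomputable def height : ℝ → ℝ := Function.invFun vol

lemma height_vol (x : ℝ) : height (vol x) = x :=
  Function.leftInverse_invFun vol_strictMono.injective x

lemma vol_height (V : ℝ) : vol (height V) = V :=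
  Function.rightInverse_invFun vol_surjective V

lemma height_strictMono : StrictMono height := fun a b hab =>
  vol_strictMono.lt_iff_lt.mp (by rwa [vol_height, vol_height])

lemma continuous_height : Continuous height :=
  height_strictMono.monotone.continuous_of_surjective fun x => ⟨vol x, height_vol x⟩

lemma pres_eq_pres {x y : ℝ} (hxy : pres x = pres y) : x = y ∨ x * y = 1 := by
  rw [pres, pres, div_eq_div_iff (by positivity) (by positivity)] at hxy
  have : (x - y) * (x * y - 1) = 0 := by linear_combination -hxy / 4
  rcases mul_eq_zero.1 this with h | h
  · exact Or.inl (by linarith)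
  · exact Or.inr (by linarith)

lemma Pfun_eq (V : ℝ) : Pfun V = pres (height V) := rfl

lemma Pfun_vol (x : ℝ) : Pfun (vol x) = pres x := by
  rw [Pfun_eq, height_vol]

lemma continuous_Pfun : Continuous Pfun := by
  have : Continuous pres := by
    unfold pres
    exact Continuous.div (by fun_prop) (by fun_prop) fun x => by positivity
  exact this.comp continuous_height

lemma hasDerivAt_vol (x : ℝ) : HasDerivAt vol (3 * (x ^ 2 + 1) / 4) x := by
  have := ((hasDerivAt_id x).mul ((hasDerivAt_pow 2 x).add_const 3)).div_const 4
  exact this.congr_deriv (by simp; ring)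

lemma integral_Pfun (V : ℝ) : ∫ u in (0 : ℝ)..V, Pfun u = 3 / 2 * height V ^ 2 := by
  have hsubst := intervalIntegral.integral_deriv_smul_comp (a := 0) (b := height V)
    (fun x _ => hasDerivAt_vol x) (by fun_prop) continuous_Pfun
  have hvol0 : vol 0 = 0 := by simp [vol]
  rw [hvol0, vol_height] at hsubst
  rw [← hsubst]
  have hintegrand : ∀ x : ℝ, (3 * (x ^ 2 + 1) / 4) • (Pfun ∘ vol) x = 3 * x := fun x => by
    rw [Function.comp_apply, Pfun_vol, pres, smul_eq_mul]
    field_simp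
  rw [intervalIntegral.integral_congr fun x _ => hintegrand x, intervalIntegral.integral_const_mul,
    integral_id]
  ring

lemma Wfun_eq (N : ℕ) (V : Fin N → ℝ) :
    Wfun N V = 3 / (2 * N) * ∑ j, height (V j) ^ 2 := by
  simp only [Wfun, integral_Pfun, ← mul_sum]
  ring

lemma sq_lt_of_vol_sq_lt {x R : ℝ} (h : 16 * vol x ^ 2 < R * (R + 3) ^ 2) : x ^ 2 < R := by
  have hvol : 16 * vol x ^ 2 = x ^ 2 * (x ^ 2 + 3) ^ 2 := by
    unfold vol
    ring
  by_contra! hR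
  rcases le_or_gt R 0 with hR0 | hR0
  · nlinarith [mul_nonpos_of_nonpos_of_nonneg hR0 (sq_nonneg (R + 3)), sq_nonneg (vol x)]
  · have : R * (R + 3) ^ 2 ≤ x ^ 2 * (x ^ 2 + 3) ^ 2 := by gcongr
    linarith

lemma eventually_pos_add_mul {a : ℝ} {r : ℝ → ℝ} (ha : 0 ≤ a) (hr : ContinuousAt r 0)
    (hpos : 0 < a ∨ 0 < r 0) : ∀ᶠ t in 𝓝[>] 0, 0 < a + t * r t := by
  rcases hpos with ha' | hr0
  · have hcont : ContinuousAt (fun t => a + t * r t) 0 := by fun_prop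
    refine nhdsWithin_le_nhds (hcont.eventually (lt_mem_nhds ?_))
    simpa using ha'
  · filter_upwards [nhdsWithin_le_nhds (hr.eventually (lt_mem_nhds hr0)), self_mem_nhdsWithin]
      with t hrt ht
    have : 0 < t * r t := mul_pos ht hrt
    linarith

lemma eventually_height_sq_add_lt_self {h m : ℝ} (hh : 1 < h) (hm : 0 < m) :
    ∀ᶠ t in 𝓝[>] 0,
      height (vol h - m * (vol (h + t) - vol h)) ^ 2 + m * (h + t) ^ 2 < h ^ 2 + m * h ^ 2 := by
  set c := 3 * m * (m + 1) * ((h ^ 2 - 1) * (h ^ 2 + 3))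
  set r : ℝ → ℝ := fun t =>
    (6 * h * m + 6 * h * m ^ 2 + 2 * h ^ 3 * m - 6 * h ^ 3 * m ^ 2 - 8 * h ^ 3 * m ^ 3)
      + t * (-12 * h ^ 2 * m ^ 2 - 12 * h ^ 2 * m ^ 3) + t ^ 2 * (-6 * h * m ^ 2 - 6 * h * m ^ 3)
      + t ^ 3 * (-m ^ 2 - m ^ 3)
  have hc : 0 < c := by
    have : 0 < h ^ 2 - 1 := by nlinarith
    positivity
  filter_upwards [eventually_pos_add_mul (r := r) hc.le (by fun_prop) (Or.inl hc),
    self_mem_nhdsWithin] with t hpos ht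
  set A := vol h - m * (vol (h + t) - vol h)
  set R := h ^ 2 + m * h ^ 2 - m * (h + t) ^ 2
  have hid : R * (R + 3) ^ 2 - 16 * A ^ 2 = t ^ 2 * (c + t * r t) := by
    simp only [A, R, c, r, vol]
    ring
  have hA : 16 * vol (height A) ^ 2 < R * (R + 3) ^ 2 := by
    rw [vol_height]
    linarith [mul_pos (pow_pos ht 2) hpos]
  linarith [sq_lt_of_vol_sq_lt hA]

lemma eventually_height_sq_add_lt_inv {h m : ℝ} (hh : 1 < h) (hm : h ^ 4 ≤ m) :
    ∀ᶠ t in 𝓝[>] 0,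
      height (vol h - m * (vol (h⁻¹ + t) - vol h⁻¹)) ^ 2 + m * (h⁻¹ + t) ^ 2
        < h ^ 2 + m * h⁻¹ ^ 2 := by
  set c := 3 * m * ((h ^ 2 - 1) * (h ^ 2 + 3)) * (m - h ^ 4)
  set r : ℝ → ℝ := fun t =>
    (-18 * h * m ^ 2 - 8 * h * m ^ 3 + 6 * h ^ 3 * m ^ 2 + 6 * h ^ 5 * m + 12 * h ^ 5 * m ^ 2
        + 2 * h ^ 7 * m)
      + t * (-15 * h ^ 2 * m ^ 2 - 12 * h ^ 2 * m ^ 3 + 3 * h ^ 6 * m ^ 2)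
      + t ^ 2 * (-6 * h ^ 3 * m ^ 2 - 6 * h ^ 3 * m ^ 3) + t ^ 3 * (-h ^ 4 * m ^ 2 - h ^ 4 * m ^ 3)
  have hh0 : 0 < h := by linarith
  have hP : 0 < (h ^ 2 - 1) * (h ^ 2 + 3) := by
    have : 0 < h ^ 2 - 1 := by nlinarith
    positivity
  have hm0 : 0 < m := by linarith [pow_pos hh0 4]
  have hc : 0 ≤ c := by
    have : 0 ≤ m - h ^ 4 := by linarith
    positivity
  have hpos : 0 < c ∨ 0 < r 0 := by
    rcases hm.lt_or_eq with hlt | rfl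
    · left
      have : 0 < m - h ^ 4 := by linarith
      positivity
    · right
      have : r 0 = 4 * h ^ 9 * ((h ^ 2 - 1) * (h ^ 2 + 3)) := by
        simp only [r]
        ring
      rw [this]
      positivity
  filter_upwards [eventually_pos_add_mul hc (by fun_prop) hpos, self_mem_nhdsWithin]
    with t hpos ht
  set A := vol h - m * (vol (h⁻¹ + t) - vol h⁻¹)
  set R := h ^ 2 + m * h⁻¹ ^ 2 - m * (h⁻¹ + t) ^ 2
  have hid : h ^ 4 * (R * (R + 3) ^ 2 - 16 * A ^ 2) = t ^ 2 * (c + t * r t) := by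
    simp only [A, R, c, r, vol]
    field_simp
    ring
  have hA : 16 * vol (height A) ^ 2 < R * (R + 3) ^ 2 := by
    rw [vol_height]
    have : 0 < h ^ 4 * (R * (R + 3) ^ 2 - 16 * A ^ 2) := hid ▸ mul_pos (pow_pos ht 2) hpos
    linarith [(pos_iff_pos_of_mul_pos this).mp (pow_pos hh0 4)]
  linarith [sq_lt_of_vol_sq_lt hA]

lemma not_isLocalMinOn_of_tendsto {α β γ : Type*} [TopologicalSpace α] [Preorder β]
    {f : α → β} {s : Set α} {a : α} {l : Filter γ} [l.NeBot] {c : γ → α}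
    (hc : Tendsto c l (𝓝[s] a)) (hlt : ∀ᶠ t in l, f (c t) < f a) : ¬ IsLocalMinOn f s a :=
  fun hmin =>
    let ⟨_, hle, hlt⟩ := ((hc.eventually hmin).and hlt).exists
    (hlt.trans_le hle).false

def transferDir {ι : Type*} [DecidableEq ι] (k : ι) (S : Finset ι) : ι → ℝ :=
  fun j => (if j ∈ S then 1 else 0) - if j = k then (#S : ℝ) else 0

lemma sum_transferDir {ι : Type*} [Fintype ι] [DecidableEq ι] (k : ι) (S : Finset ι) :
    ∑ j, transferDir k S j = 0 := by
  simp [transferDir, sum_sub_distrib]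

lemma add_smul_mem_Vset {N : ℕ} {Vbar : ℝ} {V w : Fin N → ℝ} (hV : V ∈ Vset N Vbar)
    (hw : ∑ j, w j = 0) (d : ℝ) : V + d • w ∈ Vset N Vbar := by
  simpa [Vset, sum_add_distrib, ← mul_sum, hw] using hV

lemma not_isLocalMinOn_of_transfer {N : ℕ} {Vbar : ℝ} {V : Fin N → ℝ} (hV : V ∈ Vset N Vbar)
    {k : Fin N} {S : Finset (Fin N)} (hkS : k ∉ S) {x y : ℝ} (hk : V k = vol x)
    (hS : ∀ j ∈ S, V j = vol y)
    (hdec : ∀ᶠ t in 𝓝[>] 0,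
      height (vol x - #S * (vol (y + t) - vol y)) ^ 2 + #S * (y + t) ^ 2 < x ^ 2 + #S * y ^ 2) :
    ¬ IsLocalMinOn (Wfun N) (Vset N Vbar) V := by
  set c : ℝ → Fin N → ℝ := fun t => V + (vol (y + t) - vol y) • transferDir k S
  have hc : Tendsto c (𝓝[>] 0) (𝓝[Vset N Vbar] V) := by
    refine tendsto_nhdsWithin_of_tendsto_nhds_of_eventually_within _ ?_
      (Eventually.of_forall fun t => add_smul_mem_Vset hV (sum_transferDir k S) _)
    have hcont : Continuous c := by
      have := continuous_vol
      fun_prop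
    have hc0 : c 0 = V := by simp [c]
    exact hc0 ▸ (hcont.tendsto 0).mono_left nhdsWithin_le_nhds
  refine not_isLocalMinOn_of_tendsto hc ?_
  filter_upwards [hdec] with t ht
  set a := height (vol x - #S * (vol (y + t) - vol y)) ^ 2 - x ^ 2
  set b := (y + t) ^ 2 - y ^ 2
  have hcoord : ∀ j, height (c t j) ^ 2 - height (V j) ^ 2
      = (if j = k then a else 0) + if j ∈ S then b else 0 := by
    intro j
    by_cases hjk : j = k
    · subst hjk
      have hcj : c t j = vol x - #S * (vol (y + t) - vol y) := by
        simp [c, transferDir, hkS, hk]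
        ring
      simp [hcj, hk, hkS, height_vol, a]
    · by_cases hjS : j ∈ S
      · simp [c, transferDir, hjk, hjS, hS j hjS, height_vol, b]
      · simp [c, transferDir, hjk, hjS]
  have hsum : ∑ j, height (c t j) ^ 2 = ∑ j, height (V j) ^ 2 + (a + #S * b) := by
    rw [← sub_eq_iff_eq_add', ← sum_sub_distrib, sum_congr rfl fun j _ => hcoord j,
      sum_add_distrib, sum_ite_eq', sum_ite_mem, univ_inter, sum_const, nsmul_eq_mul]
    simp
  have hN : (0 : ℝ) < N := by exact_mod_cast Fin.pos k
  rw [Wfun_eq, Wfun_eq, hsum]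
  exact mul_lt_mul_of_pos_left (add_lt_of_neg_right _ (by linarith)) (by positivity)

theorem stmt16_general (N : ℕ) (Vbar : ℝ)
    (Vstar : Fin N → ℝ)
    (hmem : Vstar ∈ Vset N Vbar)
    (heq : ∀ i j, Pfun (Vstar i) = Pfun (Vstar j))
    (h : ℝ) (h1 : 1 < h) (h2 : h ≤ ((N : ℝ) - 1) ^ ((1 : ℝ) / 4))
    (hcoord : ∃ k, Vstar k = vol h) :
    ¬ IsLocalMinOn (Wfun N) (Vset N Vbar) Vstar := by
  obtain ⟨k, hk⟩ := hcoord
  have hheight : ∀ i, height (Vstar i) = h ∨ height (Vstar i) * h = 1 := fun i =>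
    pres_eq_pres (by rw [← Pfun_eq, heq i k, hk, Pfun_vol])
  by_cases hpair : ∃ l ≠ k, Vstar l = vol h
  · obtain ⟨l, hlk, hl⟩ := hpair
    refine not_isLocalMinOn_of_transfer hmem (S := {l}) (by simpa using hlk.symm) hk
      (by simpa using hl) ?_
    simpa using eventually_height_sq_add_lt_self h1 one_pos
  push Not at hpair
  have hrest : ∀ j ∈ univ.erase k, Vstar j = vol h⁻¹ := fun j hj => by
    rcases hheight j with hj' | hj'
    · exact absurd (by rw [← vol_height (Vstar j), hj']) (hpair j (ne_of_mem_erase hj))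
    · rw [← vol_height (Vstar j), eq_inv_of_mul_eq_one_left hj']
  have hcard : h ^ 4 ≤ (#(univ.erase k) : ℝ) := by
    rw [card_erase_of_mem (mem_univ k), card_univ, Fintype.card_fin, Nat.cast_pred (Fin.pos k)]
    have hN : (0 : ℝ) ≤ N - 1 := sub_nonneg.mpr (Nat.one_le_cast.mpr (Fin.pos k))
    exact_mod_cast (Real.le_rpow_inv_iff_of_pos (by positivity) hN four_pos).mp (by simpa using h2)
  exact not_isLocalMinOn_of_transfer hmem (notMem_erase k univ) hk hrest
    (eventually_height_sq_add_lt_inv h1 hcard)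

theorem stmt16 (N : ℕ) (hN : 2 ≤ N) (Vbar : ℝ) (hV : 0 < Vbar)
    (Vstar : Fin N → ℝ)
    (hmem : Vstar ∈ Vset N Vbar)
    (heq : ∀ i j, Pfun (Vstar i) = Pfun (Vstar j))
    (h : ℝ) (h1 : 1 < h) (h2 : h ≤ ((N : ℝ) - 1) ^ ((1 : ℝ) / 4))
    (hcoord : ∃ k, Vstar k = vol h) :
    ¬ IsLocalMinOn (Wfun N) (Vset N Vbar) Vstar :=
  stmt16_general N Vbar Vstar hmem heq h h1 h2 hcoord
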